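/- Let (G,K) be a Gelfand pair of finite groups, with 1_K^G = ⊕_{r=0}^s V_r the multiplicity-free decomposition (V_0 trivial), d_r = dim V_r, spherical functions ω_r(x) = (1/|K|) Σ_{k∈K} χ^{(r)}(x^{-1}k), and double cosets K_0, ..., K_s with representatives g_0, ..., g_s (g_0 the identity). Fix t with 0 ≤ t ≤ s such that ω_t is real valued, fix u with 0 ≤ u ≤ s, and define L_t(ω_i, ω_j) = (d_j/|G|) Σ_{r=0}^s |K_r| ω_i(g_r) ω_t(g_r) conj(ω_j(g_r)). Then for every 0 ≤ i ≤ s: Σ_{j=0}^s L_t(ω_i, ω_j) ω_j(g_u) = ω_t(g_u) · ω_i(g_u). (Consequently, for the exchangeable pair built from the Plancherel measure and L_t, the random variable W(i) = (|K_u|/|K|)^{1/2} ω_i(g_u) satisfies E(W'|W) = ω_t(g_u) W.) -/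

import Mathlib

/-!
Conjugating a character inverts its argument, since `ρ(g)` is diagonalisable with eigenvalues
roots of unity. Schur's lemma turns the convolution of irreducible characters into
`d_i (χ_j * χ_i) = δ_ij |G| χ_i`, which gives the orthogonality relation
`d_i ∑_x ω_i(x) conj(ω_j(x)) = δ_ij |G|`. The `ω_i` are constant on double cosets, so this says
`A * B = 1` for the square matrices `A i r = d_i |K_r| ω_i(g_r) / |G|` and
`B r j = conj(ω_j(g_r))`. Hence `B * A = 1`, i.e. `∑_j d_j conj(ω_j(g_r)) ω_j(g_u) / |G|` is
`δ_ru / |K_u|`; inserted into the definition of `L_t`, it collapses the sum over `j` to the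
double coset `K_u`.
-/

open scoped BigOperators Classical
open CategoryTheory

/-- `χ : G → ℂ` is an irreducible character of `G`. -/
def IsIrrChar (G : Type) [Group G] (χ : G → ℂ) : Prop :=
  ∃ V : FDRep ℂ G, Simple V ∧ χ = FDRep.character V

/-- The data of a Gelfand pair `(G, K)`: the induced representation `1_K^G` decomposes
multiplicity-freely as `⊕_{r=0}^s V_r` with `V_0` trivial, `χ r` and `d r` are the character
and dimension of `V_r`, and `g r` are representatives of the `s+1` double cosets of `K`
in `G`, with `g 0 = 1`. -/
structure GelfandPairData (G : Type) [Group G] [Fintype G] where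
  /-- the subgroup `K` -/
  K : Subgroup G
  /-- `s + 1` is the number of irreducible constituents of `1_K^G` -/
  s : ℕ
  /-- the irreducible characters of the constituents `V_r` -/
  χ : Fin (s + 1) → G → ℂ
  /-- the dimensions `d_r = dim V_r` -/
  d : Fin (s + 1) → ℕ
  /-- double coset representatives `g_0, …, g_s` -/
  g : Fin (s + 1) → G
  irr : ∀ r, IsIrrChar G (χ r)
  dim_eq : ∀ r, χ r 1 = (d r : ℂ)
  triv : χ 0 = fun _ => 1
  inj : Function.Injective χ
  /-- each `V_r` occurs in `1_K^G` with multiplicity exactly one -/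
  mult_one : ∀ r, (Nat.card K : ℂ)⁻¹ * (∑ᶠ k ∈ (K : Set G), χ r k) = 1
  /-- multiplicity-freeness/completeness: every irreducible character of `G` either does not
  occur in `1_K^G` or is one of the `χ r` -/
  gelfand : ∀ ψ : G → ℂ, IsIrrChar G ψ →
    (∑ᶠ k ∈ (K : Set G), ψ k) = 0 ∨ ∃ r, ψ = χ r
  g_zero : g 0 = 1
  /-- the double cosets `K g_r K` are pairwise distinct -/
  coset_disjoint : ∀ r t : Fin (s + 1), r ≠ t →
    Disjoint {x | ∃ k₁ ∈ K, ∃ k₂ ∈ K, x = k₁ * g r * k₂}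
      {x | ∃ k₁ ∈ K, ∃ k₂ ∈ K, x = k₁ * g t * k₂}
  /-- the double cosets `K g_r K` cover `G` -/
  coset_cover : ∀ x : G, ∃ r : Fin (s + 1), ∃ k₁ ∈ K, ∃ k₂ ∈ K, x = k₁ * g r * k₂

namespace GelfandPairData

variable {G : Type} [Group G] [Fintype G]

/-- The double coset `K_r = K g_r K`. -/
def DC (D : GelfandPairData G) (r : Fin (D.s + 1)) : Set G :=
  {x | ∃ k₁ ∈ D.K, ∃ k₂ ∈ D.K, x = k₁ * D.g r * k₂}

/-- The spherical function `ω_r(x) = (1/|K|) Σ_{k ∈ K} χ^{(r)}(x⁻¹ k)`. -/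
noncomputable def ω (D : GelfandPairData G) (r : Fin (D.s + 1)) (x : G) : ℂ :=
  (Nat.card D.K : ℂ)⁻¹ * ∑ᶠ k ∈ (D.K : Set G), D.χ r (x⁻¹ * k)

end GelfandPairData

/-- The Markov kernel on spherical functions:
`L_t(ω_i, ω_j) = (d_j/|G|) Σ_r |K_r| ω_i(g_r) ω_t(g_r) conj(ω_j(g_r))`. -/
noncomputable def GelfandPairData.L {G : Type} [Group G] [Fintype G] (D : GelfandPairData G)
    (t i j : Fin (D.s + 1)) : ℂ :=
  (D.d j : ℂ) / (Fintype.card G : ℂ) *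
    ∑ r : Fin (D.s + 1), (Set.ncard (D.DC r) : ℂ) * D.ω i (D.g r) * D.ω t (D.g r) *
      (starRingEnd ℂ) (D.ω j (D.g r))

open Module

lemma Subgroup.finsum_mem_eq_sum {G M : Type*} [Group G] [Fintype G] [AddCommMonoid M]
    (H : Subgroup G) (f : G → M) : ∑ᶠ k ∈ (H : Set G), f k = ∑ k : H, f k := by
  rw [← finsum_set_coe_eq_finsum_mem, finsum_eq_sum_of_fintype]
  rfl

namespace Module.End

variable {K V : Type*} [Field K] [AddCommGroup V] [Module K V]

lemma isSemisimple_of_pow_eq_one {f : End K V} {n : ℕ} (hn : (n : K) ≠ 0) (hf : f ^ n = 1) :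
    f.IsSemisimple :=
  isSemisimple_of_squarefree_aeval_eq_zero
    (Polynomial.separable_X_pow_sub_C (1 : K) hn one_ne_zero).squarefree (by simp [hf])

lemma HasEigenvalue.pow_eq_one {f : End K V} {μ : K} (hμ : f.HasEigenvalue μ) {n : ℕ}
    (hf : f ^ n = 1) : μ ^ n = 1 := by
  obtain ⟨v, hv⟩ := hμ.exists_hasEigenvector
  have := hv.pow_apply n
  rw [hf, one_apply] at this
  exact smul_left_injective K hv.2 (this.symm.trans (one_smul K v).symm)

lemma trace_pow_eq_sum_eigenspace [IsAlgClosed K] [FiniteDimensional K V] {f : End K V}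
    (hf : f.IsSemisimple) (k : ℕ) (S : Finset K) (hS : ∀ μ, f.HasEigenvalue μ → μ ∈ S) :
    LinearMap.trace K V (f ^ k) = ∑ μ ∈ S, μ ^ k * finrank K (f.eigenspace μ) := by
  have hint := DirectSum.isInternal_submodule_of_iSupIndep_of_iSup_eq_top
    f.eigenspaces_iSupIndep hf.iSup_eigenspace_eq_top
  have hfin : {μ | f.eigenspace μ ≠ ⊥}.Finite :=
    WellFoundedGT.finite_ne_bot_of_iSupIndep f.eigenspaces_iSupIndep
  have hmaps : ∀ μ, Set.MapsTo (f ^ k) (f.eigenspace μ) (f.eigenspace μ) := fun μ =>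
    mapsTo_genEigenspace_of_comm ((Commute.refl f).pow_right k) μ 1
  have hrestrict : ∀ μ, (f ^ k).restrict (hmaps μ) = μ ^ k • LinearMap.id := fun μ => by
    ext ⟨v, hv⟩
    rcases eq_or_ne v 0 with rfl | hv0
    · simp [show (⟨0, hv⟩ : f.eigenspace μ) = 0 from rfl]
    · exact HasEigenvector.pow_apply ⟨hv, hv0⟩ k
  rw [LinearMap.trace_eq_sum_trace_restrict' hint hfin hmaps]
  simp only [hrestrict, map_smul, LinearMap.trace_id, smul_eq_mul]
  refine Finset.sum_subset (fun μ hμ => hS μ (hasEigenvalue_iff.mpr (by simpa using hμ)))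
    fun μ _ hμ => ?_
  rw [Set.Finite.mem_toFinset, Set.mem_ofPred_eq, not_not] at hμ
  rw [hμ, finrank_bot, Nat.cast_zero, mul_zero]

/-- The eigenvalues of `f` are roots of unity, so conjugating them inverts them. -/
lemma conj_trace_eq_trace_pow_pred {V : Type*} [AddCommGroup V] [Module ℂ V]
    [FiniteDimensional ℂ V] {f : End ℂ V} {n : ℕ} (hn : n ≠ 0) (hf : f ^ n = 1) :
    starRingEnd ℂ (LinearMap.trace ℂ V f) = LinearMap.trace ℂ V (f ^ (n - 1)) := by
  have hss := isSemisimple_of_pow_eq_one (by exact_mod_cast hn) hf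
  have hfin : {μ | f.HasEigenvalue μ}.Finite :=
    WellFoundedGT.finite_ne_bot_of_iSupIndep f.eigenspaces_iSupIndep
  have hS : ∀ μ, f.HasEigenvalue μ → μ ∈ hfin.toFinset := by simp
  nth_rw 1 [← pow_one f]
  rw [trace_pow_eq_sum_eigenspace hss 1 _ hS, trace_pow_eq_sum_eigenspace hss _ _ hS, map_sum]
  refine Finset.sum_congr rfl fun μ hμ => ?_
  have hμn : μ ^ n = 1 := HasEigenvalue.pow_eq_one (by simpa using hμ) hf
  rw [map_mul, map_natCast, pow_one,
    ← Complex.inv_eq_conj (Complex.norm_eq_one_of_pow_eq_one hμn hn),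
    inv_eq_of_mul_eq_one_right ((mul_pow_sub_one hn μ).trans hμn)]

end Module.End

namespace FDRep

variable {G : Type} [Group G] [Fintype G]

lemma star_character (V : FDRep ℂ G) (g : G) :
    starRingEnd ℂ (V.character g) = V.character g⁻¹ := by
  have hn := (orderOf_pos g).ne'
  have hpow : (V.ρ g : End ℂ V) ^ orderOf g = 1 := by
    rw [← map_pow, pow_orderOf_eq_one, map_one]
  have hinv : g⁻¹ = g ^ (orderOf g - 1) :=
    inv_eq_of_mul_eq_one_right ((mul_pow_sub_one hn g).trans (pow_orderOf_eq_one g))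
  rw [hinv, character, character, map_pow]
  exact Module.End.conj_trace_eq_trace_pow_pred hn hpow

noncomputable def convolveCharacter (V W : FDRep ℂ G) : V ⟶ V where
  hom := FGModuleCat.ofHom (∑ x : G, W.character x • (V.ρ x⁻¹ : End ℂ V))
  comm g := by
    apply FGModuleCat.hom_ext
    change (∑ x : G, W.character x • (V.ρ x⁻¹ : End ℂ V)) * V.ρ g
      = V.ρ g * ∑ x : G, W.character x • (V.ρ x⁻¹ : End ℂ V)
    rw [Finset.sum_mul, Finset.mul_sum]
    refine Fintype.sum_equiv (MulAut.conj g⁻¹).toEquiv _ _ fun x => ?_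
    change W.character x • (V.ρ x⁻¹ : End ℂ V) * V.ρ g
      = V.ρ g * (W.character (g⁻¹ * x * g⁻¹⁻¹) • (V.ρ (g⁻¹ * x * g⁻¹⁻¹)⁻¹ : End ℂ V))
    rw [char_conj, smul_mul_assoc, mul_smul_comm, ← map_mul, ← map_mul]
    congr 2
    group

lemma exists_sum_character_smul_eq_smul_id (V W : FDRep ℂ G) [Simple V] :
    ∃ c : ℂ, ∑ x : G, W.character x • (V.ρ x⁻¹ : End ℂ V) = c • LinearMap.id := by
  obtain ⟨c, hc⟩ := endomorphism_simple_eq_smul_id ℂ (convolveCharacter V W)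
  refine ⟨c, ?_⟩
  have h := congrArg Action.Hom.hom hc.symm
  rw [Action.smul_hom, Action.id_hom] at h
  exact congrArg (fun f => f.hom.hom) h

/-- By Schur, `∑ x, χ_W(x) • ρ_V(x⁻¹) = c • id`; taking traces against `ρ_V(a)` gives
`χ_W * χ_V = c χ_V`, and at `a = 1` character orthonormality identifies `c`. -/
lemma finrank_mul_sum_character_mul_character_inv_mul (V W : FDRep ℂ G) [Simple V] [Simple W]
    (a : G) :
    (finrank ℂ V : ℂ) * ∑ x : G, W.character x * V.character (x⁻¹ * a)
      = (if Nonempty (V ≅ W) then (Fintype.card G : ℂ) else 0) * V.character a := by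
  obtain ⟨c, hc⟩ := exists_sum_character_smul_eq_smul_id V W
  have hconv : ∀ b, ∑ x : G, W.character x * V.character (x⁻¹ * b) = c * V.character b := by
    intro b
    have := congrArg (fun f => LinearMap.trace ℂ V (f * V.ρ b)) hc
    simpa [Finset.sum_mul, smul_mul_assoc, ← map_mul, character, ← Module.End.one_eq_id]
      using this
  have horth : c * finrank ℂ V = if Nonempty (V ≅ W) then (Fintype.card G : ℂ) else 0 := by
    have hG : (Nat.card G : ℂ) ≠ 0 := by simp
    have : Invertible (Nat.card G : ℂ) := invertibleOfNonzero hG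
    have h := char_orthonormal W V
    rw [Iso.nonempty_iso_symm, inv_mul_eq_iff_eq_mul₀ hG] at h
    rw [← char_one, ← hconv]
    simpa [Nat.card_eq_fintype_card, apply_ite] using h
  rw [hconv, ← mul_assoc, mul_comm _ c, horth]

end FDRep

namespace GelfandPairData

variable {G : Type} [Group G] [Fintype G] (D : GelfandPairData G)

noncomputable def rep (r : Fin (D.s + 1)) : FDRep ℂ G := (D.irr r).choose

instance (r : Fin (D.s + 1)) : Simple (D.rep r) := (D.irr r).choose_spec.1

lemma χ_eq_character (r : Fin (D.s + 1)) : D.χ r = (D.rep r).character :=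
  (D.irr r).choose_spec.2

lemma d_eq_finrank (r : Fin (D.s + 1)) : (D.d r : ℂ) = finrank ℂ (D.rep r) := by
  rw [← D.dim_eq r, χ_eq_character, FDRep.char_one]

lemma nonempty_rep_iso_iff (i j : Fin (D.s + 1)) : Nonempty (D.rep i ≅ D.rep j) ↔ i = j :=
  ⟨fun ⟨e⟩ => D.inj (by rw [χ_eq_character, χ_eq_character, FDRep.char_iso e]),
    fun h => h ▸ ⟨Iso.refl _⟩⟩

lemma d_mul_sum_χ_mul_χ_inv_mul (i j : Fin (D.s + 1)) (a : G) :
    (D.d i : ℂ) * ∑ x : G, D.χ j x * D.χ i (x⁻¹ * a)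
      = (if i = j then (Fintype.card G : ℂ) else 0) * D.χ i a := by
  simp only [χ_eq_character, d_eq_finrank,
    FDRep.finrank_mul_sum_character_mul_character_inv_mul, nonempty_rep_iso_iff]

lemma sum_χ_mem_K (r : Fin (D.s + 1)) : ∑ k : D.K, D.χ r k = Nat.card D.K := by
  have h := D.mult_one r
  rw [Subgroup.finsum_mem_eq_sum, inv_mul_eq_one₀ (by simp)] at h
  exact h.symm

lemma ω_eq_sum (r : Fin (D.s + 1)) (x : G) :
    D.ω r x = (Nat.card D.K : ℂ)⁻¹ * ∑ k : D.K, D.χ r (x⁻¹ * k) := by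
  rw [ω, Subgroup.finsum_mem_eq_sum]

lemma star_ω (r : Fin (D.s + 1)) (x : G) :
    starRingEnd ℂ (D.ω r x) = (Nat.card D.K : ℂ)⁻¹ * ∑ k : D.K, D.χ r ((k : G)⁻¹ * x) := by
  simp [ω_eq_sum, χ_eq_character, FDRep.star_character]

lemma ω_mul_mul {k₁ k₂ : G} (hk₁ : k₁ ∈ D.K) (hk₂ : k₂ ∈ D.K) (r : Fin (D.s + 1)) (x : G) :
    D.ω r (k₁ * x * k₂) = D.ω r x := by
  rw [ω_eq_sum, ω_eq_sum]
  congr 1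
  let e : D.K ≃ D.K := (Equiv.mulLeft ⟨k₁, hk₁⟩⁻¹).trans (Equiv.mulRight ⟨k₂, hk₂⟩⁻¹)
  refine Fintype.sum_equiv e _ _ fun k => ?_
  have : (k₁ * x * k₂)⁻¹ * k = k₂⁻¹ * (x⁻¹ * k₁⁻¹ * k) := by group
  rw [this, χ_eq_character, FDRep.char_mul_comm]
  simp only [e, Equiv.trans_apply, Equiv.coe_mulLeft, Equiv.coe_mulRight, Subgroup.coe_mul,
    InvMemClass.coe_inv, mul_assoc]

lemma ω_eq_of_mem_DC {r j : Fin (D.s + 1)} {x : G} (hx : x ∈ D.DC r) :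
    D.ω j x = D.ω j (D.g r) := by
  obtain ⟨k₁, hk₁, k₂, hk₂, rfl⟩ := hx
  exact D.ω_mul_mul hk₁ hk₂ j (D.g r)

lemma g_mem_DC (r : Fin (D.s + 1)) : D.g r ∈ D.DC r :=
  ⟨1, D.K.one_mem, 1, D.K.one_mem, by group⟩

lemma sum_eq_sum_ncard_DC_mul (f : G → ℂ) (hf : ∀ r, ∀ x ∈ D.DC r, f x = f (D.g r)) :
    ∑ x, f x = ∑ r, ((D.DC r).ncard : ℂ) * f (D.g r) := by
  have hcover : Finset.univ.biUnion (fun r => (D.DC r).toFinset) = Finset.univ := by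
    ext x
    simp only [Finset.mem_biUnion, Finset.mem_univ, true_and, Set.mem_toFinset, iff_true]
    exact D.coset_cover x
  have hdisj : Set.PairwiseDisjoint ↑(Finset.univ : Finset (Fin (D.s + 1)))
      (fun r => (D.DC r).toFinset) := fun r _ t _ hrt =>
    Set.disjoint_toFinset.mpr (D.coset_disjoint r t hrt)
  rw [← hcover, Finset.sum_biUnion hdisj]
  refine Finset.sum_congr rfl fun r _ => ?_
  rw [Finset.sum_congr rfl fun x hx => hf r x (Set.mem_toFinset.mp hx), Finset.sum_const,
    nsmul_eq_mul, Set.ncard_eq_toFinset_card']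

lemma d_mul_sum_ω_mul_star_ω (i j : Fin (D.s + 1)) :
    (D.d i : ℂ) * ∑ x : G, D.ω i x * starRingEnd ℂ (D.ω j x)
      = if i = j then (Fintype.card G : ℂ) else 0 := by
  set c : ℂ := (Nat.card D.K : ℂ)
  have hc : c ≠ 0 := by simp [c]
  have hconv : ∀ k k' : D.K, (D.d i : ℂ) * ∑ x : G, D.χ i (x⁻¹ * k) * D.χ j ((k' : G)⁻¹ * x)
      = (if i = j then (Fintype.card G : ℂ) else 0) * D.χ i ((k' : G)⁻¹ * k) := by
    intro k k'
    rw [← D.d_mul_sum_χ_mul_χ_inv_mul]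
    congr 1
    refine Fintype.sum_equiv (Equiv.mulLeft ((k' : G)⁻¹)) _ _ fun x => ?_
    simp only [Equiv.coe_mulLeft, mul_inv_rev, inv_inv, mul_assoc, mul_inv_cancel_left,
      mul_comm (D.χ i _)]
  calc (D.d i : ℂ) * ∑ x : G, D.ω i x * starRingEnd ℂ (D.ω j x)
      = c⁻¹ * c⁻¹ * ∑ k : D.K, ∑ k' : D.K,
          (D.d i : ℂ) * ∑ x : G, D.χ i (x⁻¹ * k) * D.χ j ((k' : G)⁻¹ * x) := by
        have hprod : ∀ x, D.ω i x * starRingEnd ℂ (D.ω j x) = c⁻¹ * c⁻¹ *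
            ∑ k : D.K, ∑ k' : D.K, D.χ i (x⁻¹ * k) * D.χ j ((k' : G)⁻¹ * x) := fun x => by
          rw [ω_eq_sum, star_ω, mul_mul_mul_comm, Finset.sum_mul_sum]
        simp only [hprod, Finset.mul_sum]
        rw [Finset.sum_comm]
        refine Finset.sum_congr rfl fun k _ => ?_
        rw [Finset.sum_comm]
        exact Finset.sum_congr rfl fun k' _ => Finset.sum_congr rfl fun x _ => by ring
    _ = c⁻¹ * c⁻¹ * ((if i = j then (Fintype.card G : ℂ) else 0) * (c * c)) := by
        have hK : ∀ k' : D.K, ∑ k : D.K, D.χ i ((k' : G)⁻¹ * k) = c := fun k' =>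
          (Fintype.sum_equiv (Equiv.mulLeft k'⁻¹) _ _ fun k => by simp).trans (D.sum_χ_mem_K i)
        simp only [hconv, ← Finset.mul_sum]
        rw [Finset.sum_comm, Finset.sum_congr rfl fun k' _ => hK k', Finset.sum_const,
          Finset.card_univ, ← Nat.card_eq_fintype_card (α := D.K), nsmul_eq_mul]
    _ = if i = j then (Fintype.card G : ℂ) else 0 := by
        field_simp

lemma ncard_DC_ne_zero (r : Fin (D.s + 1)) : ((D.DC r).ncard : ℂ) ≠ 0 :=
  Nat.cast_ne_zero.mpr ((Set.ncard_pos (Set.toFinite _)).mpr ⟨D.g r, D.g_mem_DC r⟩).ne'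

lemma ω_orthonormal (i j : Fin (D.s + 1)) :
    (D.d i : ℂ) / Fintype.card G * ∑ r, ((D.DC r).ncard : ℂ) * D.ω i (D.g r)
      * starRingEnd ℂ (D.ω j (D.g r)) = if i = j then 1 else 0 := by
  have hG : (Fintype.card G : ℂ) ≠ 0 := by simp
  rw [div_mul_eq_mul_div, div_eq_iff hG, ite_mul, one_mul, zero_mul,
    ← D.d_mul_sum_ω_mul_star_ω i j,
    D.sum_eq_sum_ncard_DC_mul _ fun r x hx => by rw [ω_eq_of_mem_DC D hx, ω_eq_of_mem_DC D hx]]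
  simp only [mul_assoc]

/-- `ω_orthonormal` says `A * B = 1` for the square matrices below, hence `B * A = 1`. -/
lemma ω_orthonormal_dual (r u : Fin (D.s + 1)) :
    ∑ j, (D.d j : ℂ) / Fintype.card G * starRingEnd ℂ (D.ω j (D.g r)) * D.ω j (D.g u)
      = if r = u then ((D.DC u).ncard : ℂ)⁻¹ else 0 := by
  let A : Matrix (Fin (D.s + 1)) (Fin (D.s + 1)) ℂ :=
    Matrix.of fun i r => (D.d i : ℂ) / Fintype.card G * ((D.DC r).ncard : ℂ) * D.ω i (D.g r)
  let B : Matrix (Fin (D.s + 1)) (Fin (D.s + 1)) ℂ :=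
    Matrix.of fun r j => starRingEnd ℂ (D.ω j (D.g r))
  have hAB : A * B = 1 := by
    ext i j
    rw [Matrix.mul_apply, Matrix.one_apply, ← D.ω_orthonormal, Finset.mul_sum]
    simp only [A, B, Matrix.of_apply, mul_assoc]
  have hBA := congrArg (fun M => M r u) (mul_eq_one_comm.mp hAB)
  simp only [Matrix.mul_apply, Matrix.one_apply, A, B, Matrix.of_apply] at hBA
  rw [← one_mul ((D.DC u).ncard : ℂ)⁻¹, ← ite_zero_mul, ← hBA, Finset.sum_mul]
  refine Finset.sum_congr rfl fun j _ => ?_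
  field_simp [D.ncard_DC_ne_zero u]

end GelfandPairData

theorem stmt14_general {G : Type} [Group G] [Fintype G] (D : GelfandPairData G)
    (t : Fin (D.s + 1)) (u : Fin (D.s + 1)) :
    ∀ i : Fin (D.s + 1),
      (∑ j : Fin (D.s + 1), D.L t i j * D.ω j (D.g u)) = D.ω t (D.g u) * D.ω i (D.g u) := by
  intro i
  calc ∑ j, D.L t i j * D.ω j (D.g u)
      = ∑ r, ((D.DC r).ncard : ℂ) * D.ω i (D.g r) * D.ω t (D.g r) *
          ∑ j, (D.d j : ℂ) / Fintype.card G * starRingEnd ℂ (D.ω j (D.g r)) * D.ω j (D.g u) := by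
        simp only [GelfandPairData.L, Finset.mul_sum, Finset.sum_mul]
        rw [Finset.sum_comm]
        exact Finset.sum_congr rfl fun r _ => Finset.sum_congr rfl fun j _ => by ring
    _ = D.ω t (D.g u) * D.ω i (D.g u) := by
        simp only [D.ω_orthonormal_dual, mul_ite, mul_zero, Finset.sum_ite_eq', Finset.mem_univ,
          if_true]
        field_simp [D.ncard_DC_ne_zero u]

/-- **Lemma (steinsat2)**: `Σ_j L_t(ω_i, ω_j) ω_j(g_u) = ω_t(g_u) ω_i(g_u)`; consequently the
exchangeable pair built from the Plancherel measure and `L_t` for the statistic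
`W(i) = (|K_u|/|K|)^{1/2} ω_i(g_u)` satisfies `E(W'|W) = ω_t(g_u) W`. -/
theorem stmt14 {G : Type} [Group G] [Fintype G] (D : GelfandPairData G)
    (t : Fin (D.s + 1)) (ht : ∀ x : G, (D.ω t x).im = 0) (u : Fin (D.s + 1)) :
    ∀ i : Fin (D.s + 1),
      (∑ j : Fin (D.s + 1), D.L t i j * D.ω j (D.g u)) = D.ω t (D.g u) * D.ω i (D.g u) :=
  stmt14_general D t u
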